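/- arXiv:2404.06944 — 3 statements merged into one kernel-verified Lean document; each statement's English description precedes it below -/
import Mathlib

section
/- Generalized Hardy inequality: for all real α, all 0 < a < b, and all ω ∈ C¹ with ω(a) = ω(b) = 0, one has ∫_a^b r^{α+1} ω'(r)² dr ≥ (α²/4) ∫_a^b r^{α−1} ω(r)² dr. -/
open MeasureTheory Set

/-- Generalized Hardy inequality: for any real `α`, any `0 < a < b`, and any `C¹`
function `ω` vanishing at `a` and `b`,
`∫_a^b r^(α+1) ω'(r)² dr ≥ (α²/4) ∫_a^b r^(α−1) ω(r)² dr`. -/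
theorem generalized_hardy (α a b : ℝ) (ha : 0 < a) (hab : a < b)
    (ω : ℝ → ℝ) (hω : ContDiff ℝ 1 ω) (hωa : ω a = 0) (hωb : ω b = 0) :
    (α ^ 2 / 4) * ∫ r in a..b, r ^ (α - 1) * ω r ^ 2 ≤
      ∫ r in a..b, r ^ (α + 1) * (deriv ω r) ^ 2 := by
  have hab' : a ≤ b := hab.le
  have huIcc : Set.uIcc a b = Set.Icc a b := Set.uIcc_of_le hab'
  have hpos : ∀ r ∈ Set.uIcc a b, (0:ℝ) < r := by
    intro r hr
    rw [huIcc] at hr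
    exact lt_of_lt_of_le ha hr.1
  have hωd : Differentiable ℝ ω := hω.differentiable one_ne_zero
  have hcd : Continuous (deriv ω) := hω.continuous_deriv le_rfl
  have hrpow : ∀ β : ℝ, ContinuousOn (fun r : ℝ => r ^ β) (Set.uIcc a b) := fun β =>
    ContinuousOn.rpow_const continuousOn_id fun x hx => Or.inl (hpos x hx).ne'
  set Fd : ℝ → ℝ := fun r => α * r ^ (α - 1) * ω r ^ 2 + r ^ α * (2 * ω r * deriv ω r) with hFddef
  have hF : ∀ r ∈ Set.uIcc a b, HasDerivAt (fun r => r ^ α * ω r ^ 2) (Fd r) r := by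
    intro r hr
    have h1 : HasDerivAt (fun r : ℝ => r ^ α) (α * r ^ (α - 1)) r :=
      Real.hasDerivAt_rpow_const (Or.inl (hpos r hr).ne')
    have h2 : HasDerivAt (fun r => ω r ^ 2) (2 * ω r * deriv ω r) r := by
      have := ((hωd r).hasDerivAt).fun_pow 2
      simpa [mul_comm, mul_assoc, mul_left_comm] using this
    simpa [hFddef, mul_comm, mul_assoc, mul_left_comm] using h1.fun_mul h2
  have hg1 : IntervalIntegrable (fun r => r ^ (α + 1) * deriv ω r ^ 2) volume a b :=
    (((hrpow (α + 1)).mul ((hcd.pow 2).continuousOn))).intervalIntegrable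
  have hg2 : IntervalIntegrable (fun r => r ^ (α - 1) * ω r ^ 2) volume a b :=
    (((hrpow (α - 1)).mul ((hω.continuous.pow 2).continuousOn))).intervalIntegrable
  have hFdc : ContinuousOn Fd (Set.uIcc a b) := by
    apply ContinuousOn.add
    · exact (continuousOn_const.mul (hrpow (α - 1))).mul (hω.continuous.pow 2).continuousOn
    · exact (hrpow α).mul
        (((continuous_const.mul hω.continuous).mul hcd).continuousOn)
  have hFdInt : IntervalIntegrable Fd volume a b := hFdc.intervalIntegrable
  have hFTC : (∫ r in a..b, Fd r) = 0 := by
    rw [intervalIntegral.integral_eq_sub_of_hasDerivAt hF hFdInt]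
    simp [hωa, hωb]
  have key : ∀ r ∈ Set.Icc a b,
      α ^ 2 / 4 * (r ^ (α - 1) * ω r ^ 2) ≤
        r ^ (α + 1) * deriv ω r ^ 2 + (α / 2) * Fd r := by
    intro r hr
    rw [← huIcc] at hr
    have h0 : (0:ℝ) < r := hpos r hr
    have e1 : (r ^ ((α + 1) / 2)) ^ 2 = r ^ (α + 1) := by
      rw [← Real.rpow_natCast (r ^ ((α + 1) / 2)) 2, ← Real.rpow_mul h0.le]
      norm_num
    have e2 : (r ^ ((α - 1) / 2)) ^ 2 = r ^ (α - 1) := by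
      rw [← Real.rpow_natCast (r ^ ((α - 1) / 2)) 2, ← Real.rpow_mul h0.le]
      norm_num
    have e3 : r ^ ((α + 1) / 2) * r ^ ((α - 1) / 2) = r ^ α := by
      rw [← Real.rpow_add h0]
      ring_nf
    simp only [hFddef]
    rw [← e1, ← e2, ← e3]
    nlinarith [sq_nonneg (r ^ ((α + 1) / 2) * deriv ω r + (α / 2) * (r ^ ((α - 1) / 2)) * ω r)]
  have hmono :
      (∫ r in a..b, α ^ 2 / 4 * (r ^ (α - 1) * ω r ^ 2)) ≤
        ∫ r in a..b, (r ^ (α + 1) * deriv ω r ^ 2 + (α / 2) * Fd r) :=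
    intervalIntegral.integral_mono_on hab' (hg2.const_mul _)
      (hg1.add (hFdInt.const_mul _)) key
  rw [intervalIntegral.integral_const_mul] at hmono
  rwa [intervalIntegral.integral_add hg1 (hFdInt.const_mul _),
    intervalIntegral.integral_const_mul, hFTC, mul_zero, add_zero] at hmono
end

section
/- Let N ≥ 3, r₀ ∈ (0,1), κ_N = N/(2√(N−1)), and let Ψ : (0,1] → (0,∞) satisfy Ψ(sᴺ) ≥ r₀ᴺ for s ∈ [r₀,1] (e.g. Ψ nondecreasing with Ψ(r₀ᴺ) = r₀ᴺ) and Ψ(sᴺ) ≤ κ_N r₀ᴺ for s ∈ [r₀,1]. Set u_r(r) = −r^{1−N} Ψ(rᴺ). Then for every ω ∈ C¹ with compact support in (r₀,1), ∫_{r₀}^1 r^{N−1} u_r² ω'² dr ≥ (N−1) ∫_{r₀}^1 r^{N−1} u_r² ω²/r² dr. -/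
open MeasureTheory Set
open Filter Topology intervalIntegral

lemma my_zero_deriv_ae (ω : ℝ → ℝ) (hω : Differentiable ℝ ω) :
    ∀ᵐ x : ℝ, ω x = 0 → deriv ω x = 0 := by
  have hS : {x : ℝ | ω x = 0 ∧ deriv ω x ≠ 0}.Countable := by
    set S := {x : ℝ | ω x = 0 ∧ deriv ω x ≠ 0} with hSdef
    have hf : ∀ x ∈ S, ({x} : Set ℝ) ∈ 𝓝[S] x := by
      intro x hx
      have hev := ((hω x).hasDerivAt).eventually_ne (c := ω x) hx.2
      rw [eventually_nhdsWithin_iff] at hev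
      obtain ⟨u, hu, hux⟩ := eventually_iff_exists_mem.mp hev
      rw [mem_nhdsWithin_iff_exists_mem_nhds_inter]
      refine ⟨u, hu, ?_⟩
      rintro y ⟨hyu, hyS⟩
      by_contra hne
      simp only [mem_singleton_iff] at hne
      have := hux y hyu (by simpa using hne)
      rw [hx.1] at this
      exact this hyS.1
    obtain ⟨t, hts, htc, hcov⟩ := TopologicalSpace.countable_cover_nhdsWithin hf
    refine htc.mono (hcov.trans ?_)
    intro y hy
    simp only [mem_iUnion, mem_singleton_iff, exists_prop] at hy
    obtain ⟨i, hi, rfl⟩ := hy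
    exact hi
  have h0 : volume {x : ℝ | ω x = 0 ∧ deriv ω x ≠ 0} = 0 := hS.measure_zero _
  rw [ae_iff]
  convert h0 using 2
  ext x
  push_neg
  tauto

lemma my_hardy (a b α : ℝ) (ha : 0 < a) (hab : a ≤ b) (ω : ℝ → ℝ)
    (hω : ContDiff ℝ 1 ω) (h0a : ω a = 0) (h0b : ω b = 0) :
    α ^ 2 / 4 * ∫ r in a..b, r ^ (α - 1) * ω r ^ 2 ≤
      ∫ r in a..b, r ^ (α + 1) * (deriv ω r) ^ 2 := by
  have hωd : Differentiable ℝ ω := hω.differentiable one_ne_zero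
  have hω' : Continuous (deriv ω) := hω.continuous_deriv le_rfl
  have huIcc : uIcc a b = Icc a b := uIcc_of_le hab
  have hpos : ∀ x ∈ uIcc a b, 0 < x := by
    intro x hx; rw [huIcc] at hx; exact lt_of_lt_of_le ha hx.1
  have hrp : ∀ c : ℝ, ContinuousOn (fun x : ℝ => x ^ c) (uIcc a b) := by
    intro c
    exact ContinuousOn.rpow_const continuousOn_id fun x hx => Or.inl (hpos x hx).ne'
  have hint1 : IntervalIntegrable (fun r => r ^ (α + 1) * (deriv ω r) ^ 2) volume a b :=
    (((hrp (α + 1)).mul ((hω'.continuousOn).pow 2))).intervalIntegrable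
  have hint2 : IntervalIntegrable (fun r => r ^ (α - 1) * ω r ^ 2) volume a b :=
    (((hrp (α - 1)).mul ((hω.continuous.continuousOn).pow 2))).intervalIntegrable
  have hint3 : IntervalIntegrable (fun r => r ^ α * (ω r * deriv ω r)) volume a b :=
    ((hrp α).mul ((hω.continuous.continuousOn).mul hω'.continuousOn)).intervalIntegrable
  set I1 := ∫ r in a..b, r ^ (α + 1) * (deriv ω r) ^ 2 with hI1
  set I2 := ∫ r in a..b, r ^ (α - 1) * ω r ^ 2 with hI2
  set I3 := ∫ r in a..b, r ^ α * (ω r * deriv ω r) with hI3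
  have hftc : α * I2 + 2 * I3 = 0 := by
    have hd : ∀ x ∈ uIcc a b,
        HasDerivAt (fun r : ℝ => r ^ α * ω r ^ 2)
          (α * (x ^ (α - 1) * ω x ^ 2) + 2 * (x ^ α * (ω x * deriv ω x))) x := by
      intro x hx
      have h1 : HasDerivAt (fun r : ℝ => r ^ α) (α * x ^ (α - 1)) x :=
        Real.hasDerivAt_rpow_const (Or.inl (hpos x hx).ne')
      have h2 : HasDerivAt (fun r : ℝ => ω r ^ 2) (2 * ω x * deriv ω x) x := by
        have := ((hωd x).hasDerivAt).fun_pow 2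
        simpa using this
      have := h1.fun_mul h2
      exact this.congr_deriv (by ring)
    have := integral_eq_sub_of_hasDerivAt hd
      (((hint2.const_mul α)).add ((hint3.const_mul 2)))
    rw [h0a, h0b] at this
    simp only [mul_zero, zero_pow, ne_eq, OfNat.ofNat_ne_zero, not_false_iff] at this
    have heq : (∫ r in a..b, (α * (r ^ (α - 1) * ω r ^ 2) + 2 * (r ^ α * (ω r * deriv ω r))))
        = α * I2 + 2 * I3 := by
      rw [integral_add (hint2.const_mul α) (hint3.const_mul 2),
        intervalIntegral.integral_const_mul, intervalIntegral.integral_const_mul]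
    rw [heq] at this
    simpa using this
  have hsq : 0 ≤ I1 + α * I3 + α ^ 2 / 4 * I2 := by
    have h0 : 0 ≤ ∫ r in a..b,
        (r ^ ((α + 1) / 2) * deriv ω r + α / 2 * (r ^ ((α - 1) / 2) * ω r)) ^ 2 :=
      integral_nonneg hab fun u _ => sq_nonneg _
    have hcongr : (∫ r in a..b,
        (r ^ ((α + 1) / 2) * deriv ω r + α / 2 * (r ^ ((α - 1) / 2) * ω r)) ^ 2)
        = ∫ r in a..b, (r ^ (α + 1) * (deriv ω r) ^ 2
            + (α * (r ^ α * (ω r * deriv ω r)) + α ^ 2 / 4 * (r ^ (α - 1) * ω r ^ 2))) := by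
      apply integral_congr
      intro x hx
      have hx0 : 0 < x := hpos x hx
      have e1 : (x ^ ((α + 1) / 2)) ^ 2 = x ^ (α + 1) := by
        rw [← Real.rpow_natCast (x ^ ((α + 1) / 2)) 2, ← Real.rpow_mul hx0.le]
        norm_num
      have e2 : (x ^ ((α - 1) / 2)) ^ 2 = x ^ (α - 1) := by
        rw [← Real.rpow_natCast (x ^ ((α - 1) / 2)) 2, ← Real.rpow_mul hx0.le]
        norm_num
      have e3 : x ^ ((α + 1) / 2) * x ^ ((α - 1) / 2) = x ^ α := by
        rw [← Real.rpow_add hx0]; congr 1; ring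
      have em : 2 * (x ^ ((α + 1) / 2) * deriv ω x) * (α / 2 * (x ^ ((α - 1) / 2) * ω x))
          = α * (x ^ α * (ω x * deriv ω x)) := by rw [← e3]; ring
      simp only [add_sq, mul_pow, em, e1, e2]; ring
    rw [hcongr, integral_add hint1 ((hint3.const_mul α).add (hint2.const_mul (α ^ 2 / 4))),
      integral_add (hint3.const_mul α) (hint2.const_mul (α ^ 2 / 4)),
      intervalIntegral.integral_const_mul, intervalIntegral.integral_const_mul] at h0
    linarith
  have hI3eq : I3 = -(α / 2) * I2 := by linarith
  rw [hI3eq] at hsq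
  nlinarith [sq_nonneg α]

/-- Stability verification in the annulus: if `r₀ᴺ ≤ Ψ(sᴺ) ≤ κ_N r₀ᴺ` on `[r₀,1]` with
`κ_N = N/(2√(N−1))` and `u_r(r) = −r^{1−N}Ψ(rᴺ)`, then for every `C¹` function `ω`
compactly supported in `(r₀,1)`,
`∫_{r₀}^1 r^{N−1} u_r² ω'² dr ≥ (N−1) ∫_{r₀}^1 r^{N−1} u_r² ω²/r² dr`. -/
theorem annulus_stability_inequality (N : ℕ) (hN : 3 ≤ N) (r₀ : ℝ) (hr₀ : r₀ ∈ Ioo (0 : ℝ) 1)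
    (Ψ : ℝ → ℝ)
    (hlb : ∀ s ∈ Icc r₀ 1, r₀ ^ N ≤ Ψ (s ^ N))
    (hub : ∀ s ∈ Icc r₀ 1, Ψ (s ^ N) ≤ (N / (2 * Real.sqrt ((N : ℝ) - 1))) * r₀ ^ N)
    (ω : ℝ → ℝ) (hω : ContDiff ℝ 1 ω) (hsupp : tsupport ω ⊆ Ioo r₀ 1) :
    ((N : ℝ) - 1) *
        ∫ r in r₀..1, r ^ ((N : ℝ) - 1) * (-r ^ ((1 : ℝ) - N) * Ψ (r ^ N)) ^ 2 * ω r ^ 2 / r ^ 2 ≤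
      ∫ r in r₀..1, r ^ ((N : ℝ) - 1) * (-r ^ ((1 : ℝ) - N) * Ψ (r ^ N)) ^ 2 * (deriv ω r) ^ 2 := by
  obtain ⟨hr0pos, hr01⟩ := hr₀
  have hab : r₀ ≤ 1 := hr01.le
  have huIcc : uIcc r₀ 1 = Icc r₀ 1 := uIcc_of_le hab
  have hωd : Differentiable ℝ ω := hω.differentiable one_ne_zero
  have hω' : Continuous (deriv ω) := hω.continuous_deriv le_rfl
  set κ : ℝ := (N : ℝ) / (2 * Real.sqrt ((N : ℝ) - 1)) with hκdef
  have hN3 : (3 : ℝ) ≤ (N : ℝ) := by exact_mod_cast hN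
  have hN1 : (0 : ℝ) < (N : ℝ) - 1 := by linarith
  have hr0N : (0 : ℝ) < r₀ ^ N := pow_pos hr0pos N
  have hκpos : 0 < κ := by
    apply div_pos (by linarith)
    positivity
  have hκ2 : ((N : ℝ) - 1) * κ ^ 2 = (N : ℝ) ^ 2 / 4 := by
    rw [hκdef, div_pow, mul_pow, Real.sq_sqrt hN1.le]
    field_simp
    ring
  -- pointwise key identity
  have hkey : ∀ x : ℝ, 0 < x →
      x ^ ((N : ℝ) - 1) * (x ^ ((1 : ℝ) - N)) ^ 2 = x ^ ((1 : ℝ) - N) := by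
    intro x hx
    rw [← Real.rpow_natCast (x ^ ((1 : ℝ) - N)) 2, ← Real.rpow_mul hx.le, ← Real.rpow_add hx]
    congr 1
    push_cast
    ring
  have hkey2 : ∀ x : ℝ, 0 < x →
      x ^ (-(N : ℝ) - 1) * x ^ 2 = x ^ ((1 : ℝ) - N) := by
    intro x hx
    rw [← Real.rpow_natCast x 2, ← Real.rpow_add hx]
    congr 1
    push_cast
    ring
  -- rewrite both integrals into canonical form
  have eqF : EqOn
      (fun r : ℝ => r ^ ((N : ℝ) - 1) * (-r ^ ((1 : ℝ) - N) * Ψ (r ^ N)) ^ 2 * ω r ^ 2 / r ^ 2)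
      (fun r : ℝ => r ^ (-(N : ℝ) - 1) * Ψ (r ^ N) ^ 2 * ω r ^ 2) (uIcc r₀ 1) := by
    intro x hx
    rw [huIcc] at hx
    have hx0 : 0 < x := lt_of_lt_of_le hr0pos hx.1
    have k1 := hkey x hx0
    have k2 := hkey2 x hx0
    simp only
    rw [div_eq_iff (by positivity : (x : ℝ) ^ 2 ≠ 0)]
    linear_combination (Ψ (x ^ N) ^ 2 * ω x ^ 2) * k1 - (Ψ (x ^ N) ^ 2 * ω x ^ 2) * k2
  have eqG : EqOn
      (fun r : ℝ => r ^ ((N : ℝ) - 1) * (-r ^ ((1 : ℝ) - N) * Ψ (r ^ N)) ^ 2 * (deriv ω r) ^ 2)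
      (fun r : ℝ => r ^ ((1 : ℝ) - N) * Ψ (r ^ N) ^ 2 * (deriv ω r) ^ 2) (uIcc r₀ 1) := by
    intro x hx
    rw [huIcc] at hx
    have hx0 : 0 < x := lt_of_lt_of_le hr0pos hx.1
    have k1 := hkey x hx0
    simp only
    linear_combination (Ψ (x ^ N) ^ 2 * (deriv ω x) ^ 2) * k1
  rw [integral_congr eqF, integral_congr eqG]
  set F : ℝ → ℝ := fun r => r ^ (-(N : ℝ) - 1) * Ψ (r ^ N) ^ 2 * ω r ^ 2 with hFdef
  set G : ℝ → ℝ := fun r => r ^ ((1 : ℝ) - N) * Ψ (r ^ N) ^ 2 * (deriv ω r) ^ 2 with hGdef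
  -- bounds on Ψ
  have hψb : ∀ x ∈ Icc r₀ 1, (r₀ ^ N) ^ 2 ≤ Ψ (x ^ N) ^ 2 ∧ Ψ (x ^ N) ^ 2 ≤ (κ * r₀ ^ N) ^ 2 := by
    intro x hx
    have h1 := hlb x hx
    have h2 := hub x hx
    constructor
    · exact pow_le_pow_left₀ hr0N.le h1 2
    · exact pow_le_pow_left₀ (le_trans hr0N.le h1) h2 2
  -- nonnegativity of G on the interval
  have hGnn : ∀ x ∈ Icc r₀ 1, 0 ≤ G x := by
    intro x hx
    have hx0 : (0 : ℝ) < x := lt_of_lt_of_le hr0pos hx.1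
    exact mul_nonneg (mul_nonneg (Real.rpow_nonneg hx0.le _) (sq_nonneg _)) (sq_nonneg _)
  -- continuity-based integrabilities
  have hposu : ∀ x ∈ uIcc r₀ 1, 0 < x := by
    intro x hx; rw [huIcc] at hx; exact lt_of_lt_of_le hr0pos hx.1
  have hrp : ∀ c : ℝ, ContinuousOn (fun x : ℝ => x ^ c) (uIcc r₀ 1) := fun c =>
    ContinuousOn.rpow_const continuousOn_id fun x hx => Or.inl (hposu x hx).ne'
  have hint2 : IntervalIntegrable (fun r => r ^ (-(N : ℝ) - 1) * ω r ^ 2) volume r₀ 1 :=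
    ((hrp _).mul ((hω.continuous.continuousOn).pow 2)).intervalIntegrable
  have hint1 : IntervalIntegrable (fun r => r ^ ((1 : ℝ) - N) * (deriv ω r) ^ 2) volume r₀ 1 :=
    ((hrp _).mul ((hω'.continuousOn).pow 2)).intervalIntegrable
  by_cases hFint : IntervalIntegrable F volume r₀ 1
  · -- main case: get integrability of G
    have hGint : IntervalIntegrable G volume r₀ 1 := by
      rw [intervalIntegrable_iff_integrableOn_Ioc_of_le hab] at hFint ⊢
      have hmeasF : AEStronglyMeasurable F (volume.restrict (Ioc r₀ 1)) :=
        hFint.aestronglyMeasurable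
      set q : ℝ → ℝ := fun r => F r / (r ^ (-(N : ℝ) - 1) * ω r ^ 2) with hqdef
      have hcden : AEMeasurable (fun r : ℝ => r ^ (-(N : ℝ) - 1) * ω r ^ 2)
          (volume.restrict (Ioc r₀ 1)) := by
        apply ContinuousOn.aemeasurable _ measurableSet_Ioc
        exact ((hrp _).mono (by rw [huIcc]; exact Ioc_subset_Icc_self)).mul
          ((hω.continuous.continuousOn).pow 2)
      have hcrp : AEMeasurable (fun r : ℝ => r ^ ((1 : ℝ) - N))
          (volume.restrict (Ioc r₀ 1)) := by
        apply ContinuousOn.aemeasurable _ measurableSet_Ioc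
        exact (hrp _).mono (by rw [huIcc]; exact Ioc_subset_Icc_self)
      have hqmeas : AEMeasurable q (volume.restrict (Ioc r₀ 1)) :=
        hmeasF.aemeasurable.div hcden
      have hG'meas : AEStronglyMeasurable
          (fun r => r ^ ((1 : ℝ) - N) * q r * (deriv ω r) ^ 2)
          (volume.restrict (Ioc r₀ 1)) :=
        ((hcrp.mul hqmeas).mul
          ((hω'.pow 2).measurable.aemeasurable)).aestronglyMeasurable
      have haeeq : (fun r => r ^ ((1 : ℝ) - N) * q r * (deriv ω r) ^ 2)
          =ᵐ[volume.restrict (Ioc r₀ 1)] G := by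
        filter_upwards [ae_restrict_mem measurableSet_Ioc,
          ae_restrict_of_ae (my_zero_deriv_ae ω hωd)] with x hx hzd
        have hx0 : (0 : ℝ) < x := lt_trans hr0pos hx.1
        by_cases hωx : ω x = 0
        · simp only [hGdef, hzd hωx]
          ring
        · have hden : x ^ (-(N : ℝ) - 1) * ω x ^ 2 ≠ 0 := by
            apply mul_ne_zero (by positivity) (pow_ne_zero 2 hωx)
          have : q x = Ψ (x ^ N) ^ 2 := by
            rw [hqdef]
            simp only [hFdef]
            field_simp
          simp only [hGdef, this]
      have hGmeas : AEStronglyMeasurable G (volume.restrict (Ioc r₀ 1)) :=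
        hG'meas.congr haeeq
      -- boundedness
      obtain ⟨M, hM⟩ := (isCompact_Icc (a := r₀) (b := 1)).exists_bound_of_continuousOn
        hω'.continuousOn
      have hbound : ∀ x ∈ Ioc r₀ 1, ‖G x‖ ≤ r₀ ^ ((1 : ℝ) - N) * (κ * r₀ ^ N) ^ 2 * M ^ 2 := by
        intro x hx
        have hxIcc : x ∈ Icc r₀ 1 := ⟨hx.1.le, hx.2⟩
        have hx0 : (0 : ℝ) < x := lt_trans hr0pos hx.1
        have b1 : x ^ ((1 : ℝ) - N) ≤ r₀ ^ ((1 : ℝ) - N) :=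
          Real.rpow_le_rpow_of_nonpos hr0pos hx.1.le (by linarith)
        have b2 := (hψb x hxIcc).2
        have hMx := hM x hxIcc
        have b3 : (deriv ω x) ^ 2 ≤ M ^ 2 := by
          have : |deriv ω x| ≤ M := by simpa using hMx
          nlinarith [abs_nonneg (deriv ω x), sq_abs (deriv ω x)]
        rw [Real.norm_eq_abs, abs_of_nonneg (hGnn x hxIcc)]
        have step1 : x ^ ((1 : ℝ) - N) * Ψ (x ^ N) ^ 2 ≤
            r₀ ^ ((1 : ℝ) - N) * (κ * r₀ ^ N) ^ 2 :=
          mul_le_mul b1 b2 (sq_nonneg _) (Real.rpow_nonneg hr0pos.le _)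
        exact mul_le_mul step1 b3 (sq_nonneg _)
          (mul_nonneg (Real.rpow_nonneg hr0pos.le _) (sq_nonneg _))
      apply Integrable.mono' (integrableOn_const (C := r₀ ^ ((1 : ℝ) - N) * (κ * r₀ ^ N) ^ 2 * M ^ 2) measure_Ioc_lt_top.ne) hGmeas
      filter_upwards [ae_restrict_mem measurableSet_Ioc] with x hx
      exact hbound x hx
    -- the chain of inequalities
    have hHardy := my_hardy r₀ 1 (-(N : ℝ)) hr0pos hab ω hω
      (image_eq_zero_of_notMem_tsupport fun h => lt_irrefl r₀ (hsupp h).1)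
      (image_eq_zero_of_notMem_tsupport fun h => lt_irrefl 1 (hsupp h).2)
    rw [show ((-(N : ℝ)) ^ 2 : ℝ) = (N : ℝ) ^ 2 by ring,
      show (-(N : ℝ) + 1 : ℝ) = (1 : ℝ) - N by ring] at hHardy
    calc ((N : ℝ) - 1) * ∫ r in r₀..1, F r
        ≤ ((N : ℝ) - 1) * ((κ * r₀ ^ N) ^ 2 * ∫ r in r₀..1, r ^ (-(N : ℝ) - 1) * ω r ^ 2) := by
          apply mul_le_mul_of_nonneg_left _ (by linarith : (0:ℝ) ≤ (N : ℝ) - 1)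
          rw [← intervalIntegral.integral_const_mul]
          apply integral_mono_on hab hFint (hint2.const_mul _)
          intro x hx
          have hx0 : (0 : ℝ) < x := lt_of_lt_of_le hr0pos hx.1
          have b2 := (hψb x hx).2
          simp only [hFdef]
          nlinarith [mul_nonneg (Real.rpow_nonneg hx0.le (-(N : ℝ) - 1)) (sq_nonneg (ω x)),
            mul_nonneg (mul_nonneg (Real.rpow_nonneg hx0.le (-(N : ℝ) - 1)) (sq_nonneg (ω x)))
              (sub_nonneg.mpr b2)]
      _ = (r₀ ^ N) ^ 2 * ((N : ℝ) ^ 2 / 4 * ∫ r in r₀..1, r ^ (-(N : ℝ) - 1) * ω r ^ 2) := by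
          linear_combination (∫ r in r₀..1, r ^ (-(N : ℝ) - 1) * ω r ^ 2) * (r₀ ^ N) ^ 2 * hκ2
      _ ≤ (r₀ ^ N) ^ 2 * ∫ r in r₀..1, r ^ ((1 : ℝ) - N) * (deriv ω r) ^ 2 :=
          mul_le_mul_of_nonneg_left hHardy (sq_nonneg _)
      _ = ∫ r in r₀..1, (r₀ ^ N) ^ 2 * (r ^ ((1 : ℝ) - N) * (deriv ω r) ^ 2) :=
          (intervalIntegral.integral_const_mul _ _).symm
      _ ≤ ∫ r in r₀..1, G r := by
          apply integral_mono_on hab (hint1.const_mul _) hGint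
          intro x hx
          have hx0 : (0 : ℝ) < x := lt_of_lt_of_le hr0pos hx.1
          have b1 := (hψb x hx).1
          simp only [hGdef]
          nlinarith [mul_nonneg (Real.rpow_nonneg hx0.le ((1 : ℝ) - N)) (sq_nonneg (deriv ω x)),
            mul_nonneg (mul_nonneg (Real.rpow_nonneg hx0.le ((1 : ℝ) - N))
              (sq_nonneg (deriv ω x))) (sub_nonneg.mpr b1)]
  · -- non-integrable case
    rw [integral_undef hFint, mul_zero]
    exact integral_nonneg hab hGnn
end

section
/- Let N ≥ 3, q > N/(N−2), r₀ ∈ (0,1), κ_N = N/(2√(N−1)), and let Ψ : (0,1] → [0,∞) satisfy Ψ(t) = t for 0 < t ≤ r₀ᴺ and Ψ(t) ≤ κ_N r₀ᴺ for r₀ᴺ < t ≤ 1. Define u(r) = ∫_r^1 Ψ(sᴺ) s^{1−N} ds. Then ‖u‖_{L^q(B₁)}^q ≤ C'_{N,q} r₀^{N+2q} for a constant C'_{N,q} depending only on N and q. -/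
open MeasureTheory Metric Set

set_option maxHeartbeats 1000000 in
/-- Upper bound for the `L^q` norm, `q > N/(N−2)`: there is `C' = C'_{N,q} > 0` such that
for every `r₀ ∈ (0,1)` and every `Ψ` with `Ψ(t) = t` on `(0,r₀ᴺ]` and
`0 ≤ Ψ(t) ≤ κ_N r₀ᴺ` on `(r₀ᴺ,1]` (`κ_N = N/(2√(N−1))`), the function
`u(r) = ∫_r^1 Ψ(sᴺ)s^{1−N} ds` satisfies `‖u‖_{L^q(B₁)}^q ≤ C' r₀^{N+2q}`. -/
theorem lq_upper_bound (N : ℕ) (hN : 3 ≤ N) (q : ℝ) (hq : (N : ℝ) / ((N : ℝ) - 2) < q) :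
    ∃ C > (0 : ℝ), ∀ r₀ ∈ Ioo (0 : ℝ) 1, ∀ Ψ u : ℝ → ℝ,
      (∀ t ∈ Ioc (0 : ℝ) (r₀ ^ N), Ψ t = t) →
      (∀ t ∈ Ioc (r₀ ^ N) 1,
        0 ≤ Ψ t ∧ Ψ t ≤ (N / (2 * Real.sqrt ((N : ℝ) - 1))) * r₀ ^ N) →
      (∀ r, u r = ∫ s in r..1, Ψ (s ^ N) * s ^ ((1 : ℝ) - N)) →
      (∫ x in ball (0 : EuclideanSpace ℝ (Fin N)) 1, |u ‖x‖| ^ q) ≤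
        C * r₀ ^ ((N : ℝ) + 2 * q) := by
  have hν3 : (3:ℝ) ≤ (N:ℝ) := by exact_mod_cast hN
  have hν2 : (0:ℝ) < (N:ℝ) - 2 := by linarith
  have hq1 : 1 < q := lt_of_le_of_lt (by rw [le_div_iff₀ hν2]; linarith) hq
  have hq0 : 0 < q := by linarith
  have hD : 0 < ((N:ℝ)-2)*q - (N:ℝ) := by
    have := (div_lt_iff₀ hν2).mp hq
    nlinarith
  set κ : ℝ := (N:ℝ) / (2 * Real.sqrt ((N:ℝ) - 1)) with hκdef
  have hsq : 0 < Real.sqrt ((N:ℝ)-1) := Real.sqrt_pos.mpr (by linarith)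
  have hκpos : 0 < κ := div_pos (by linarith) (by linarith)
  have hκ1 : 1 ≤ κ := by
    rw [hκdef, le_div_iff₀ (by linarith), one_mul]
    have h1 : Real.sqrt ((N:ℝ)-1) ≤ (N:ℝ)/2 := by
      rw [show (N:ℝ)/2 = Real.sqrt (((N:ℝ)/2)^2) from (Real.sqrt_sq (by linarith)).symm]
      exact Real.sqrt_le_sqrt (by nlinarith)
    linarith
  set A : ℝ := 1/2 + κ/((N:ℝ)-2) with hAdef
  have hApos : 0 < A := by positivity
  set D : ℝ := ((N:ℝ)-2)*q - (N:ℝ) with hDdef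
  haveI : Nonempty (Fin N) := ⟨⟨0, by omega⟩⟩
  haveI : Nontrivial (EuclideanSpace ℝ (Fin N)) := inferInstance
  have hvolpos : 0 < (volume (ball (0 : EuclideanSpace ℝ (Fin N)) 1)).toReal :=
    ENNReal.toReal_pos (measure_ball_pos _ _ one_pos).ne' measure_ball_lt_top.ne
  set C : ℝ := (N:ℝ) * (volume (ball (0 : EuclideanSpace ℝ (Fin N)) 1)).toReal *
      (A ^ q * (1/(N:ℝ) + 1/D)) with hCdef
  have hCpos : 0 < C := by
    have : 0 < A ^ q := Real.rpow_pos_of_pos hApos q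
    have h1 : 0 < 1/(N:ℝ) + 1/D := by positivity
    positivity
  refine ⟨C, hCpos, ?_⟩
  rintro r₀ ⟨hr₀0, hr₀1⟩ Ψ u hΨ1 hΨ2 hu
  have hr₀N : 0 < r₀ ^ N := pow_pos hr₀0 N
  have hr₀N1 : r₀ ^ N ≤ 1 := pow_le_one₀ hr₀0.le hr₀1.le
  have hΨub : ∀ t ∈ Ioc (0:ℝ) 1, 0 ≤ Ψ t ∧ Ψ t ≤ κ * r₀ ^ N := by
    intro t ht
    by_cases h : t ≤ r₀ ^ N
    · rw [hΨ1 t ⟨ht.1, h⟩]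
      exact ⟨ht.1.le, le_trans h (le_mul_of_one_le_left hr₀N.le hκ1)⟩
    · exact hΨ2 t ⟨lt_of_not_ge h, ht.2⟩
  -- nonnegativity of the integrand
  have hfnn : ∀ s : ℝ, 0 < s → s ≤ 1 → 0 ≤ Ψ (s ^ N) * s ^ ((1:ℝ) - N) := by
    intro s hs hs1
    exact mul_nonneg (hΨub _ ⟨pow_pos hs N, pow_le_one₀ hs.le hs1⟩).1
      (Real.rpow_nonneg hs.le _)
  have hfub : ∀ s : ℝ, 0 < s → s ≤ 1 →
      Ψ (s ^ N) * s ^ ((1:ℝ) - N) ≤ κ * r₀ ^ N * s ^ ((1:ℝ) - N) := by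
    intro s hs hs1
    exact mul_le_mul_of_nonneg_right (hΨub _ ⟨pow_pos hs N, pow_le_one₀ hs.le hs1⟩).2
      (Real.rpow_nonneg hs.le _)
  have hGint : ∀ a b : ℝ, 0 < a → a ≤ b →
      IntervalIntegrable (fun s : ℝ => κ * r₀ ^ N * s ^ ((1:ℝ) - N)) volume a b := by
    intro a b ha hab
    apply ContinuousOn.intervalIntegrable
    rw [uIcc_of_le hab]
    apply ContinuousOn.mul continuousOn_const
    apply ContinuousOn.rpow_const continuousOn_id
    intro x hx
    exact Or.inl (ne_of_gt (lt_of_lt_of_le ha hx.1))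
  have hupos : ∀ r : ℝ, 0 < r → r ≤ 1 → 0 ≤ u r := by
    intro r hr hr1
    rw [hu]
    exact intervalIntegral.integral_nonneg hr1
      (fun s hs => hfnn s (lt_of_lt_of_le hr hs.1) hs.2)
  have hrpowint : ∀ r : ℝ, 0 < r → r ≤ 1 →
      (∫ s in r..1, s ^ ((1:ℝ) - N)) ≤ r ^ ((2:ℝ) - N) / ((N:ℝ) - 2) := by
    intro r hr hr1
    rw [integral_rpow (Or.inr ⟨by intro h; rw [sub_eq_neg_add] at h; nlinarith,
      by rw [uIcc_of_le hr1]; exact fun h => absurd h.1 (not_le.mpr hr)⟩)]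
    have he : (1:ℝ) - (N:ℝ) + 1 = 2 - (N:ℝ) := by ring
    have e2 : ((1:ℝ) - r ^ ((2:ℝ)-(N:ℝ))) / ((2:ℝ)-(N:ℝ)) =
        (r ^ ((2:ℝ)-(N:ℝ)) - 1) / ((N:ℝ)-2) := by
      rw [div_eq_div_iff (by linarith) (by linarith)]; ring
    rw [he, Real.one_rpow, e2]
    gcongr
    linarith
  have hub1 : ∀ r : ℝ, 0 < r → r ≤ 1 → u r ≤ κ/((N:ℝ)-2) * r₀ ^ N * r ^ ((2:ℝ) - N) := by
    intro r hr hr1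
    by_cases hInt : IntervalIntegrable (fun s : ℝ => Ψ (s ^ N) * s ^ ((1:ℝ) - N)) volume r 1
    · rw [hu]
      calc (∫ s in r..1, Ψ (s ^ N) * s ^ ((1:ℝ) - N))
          ≤ ∫ s in r..1, κ * r₀ ^ N * s ^ ((1:ℝ) - N) :=
            intervalIntegral.integral_mono_on hr1 hInt (hGint r 1 hr hr1)
              (fun s hs => hfub s (lt_of_lt_of_le hr hs.1) hs.2)
        _ = κ * r₀ ^ N * ∫ s in r..1, s ^ ((1:ℝ) - N) := by
            rw [← intervalIntegral.integral_const_mul]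
        _ ≤ κ * r₀ ^ N * (r ^ ((2:ℝ) - N) / ((N:ℝ) - 2)) := by
            apply mul_le_mul_of_nonneg_left (hrpowint r hr hr1) (by positivity)
        _ = κ/((N:ℝ)-2) * r₀ ^ N * r ^ ((2:ℝ) - N) := by ring
    · rw [hu, intervalIntegral.integral_undef hInt]
      positivity
  have hr₀2 : r₀ ^ N * r₀ ^ ((2:ℝ) - N) = r₀ ^ 2 := by
    rw [← Real.rpow_natCast r₀ N, ← Real.rpow_add hr₀0, ← Real.rpow_natCast r₀ 2]
    norm_num
  have hub2 : ∀ r : ℝ, 0 < r → r ≤ r₀ → u r ≤ A * r₀ ^ 2 := by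
    intro r hr hrr₀
    by_cases hInt : IntervalIntegrable (fun s : ℝ => Ψ (s ^ N) * s ^ ((1:ℝ) - N)) volume r 1
    · have h1 : IntervalIntegrable (fun s : ℝ => Ψ (s ^ N) * s ^ ((1:ℝ) - N)) volume r r₀ :=
        hInt.mono_set (by
          rw [uIcc_of_le hrr₀, uIcc_of_le (hrr₀.trans hr₀1.le)]
          exact Icc_subset_Icc le_rfl hr₀1.le)
      have h2 : IntervalIntegrable (fun s : ℝ => Ψ (s ^ N) * s ^ ((1:ℝ) - N)) volume r₀ 1 :=
        hInt.mono_set (by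
          rw [uIcc_of_le hr₀1.le, uIcc_of_le (hrr₀.trans hr₀1.le)]
          exact Icc_subset_Icc hrr₀ le_rfl)
      have hsplit : u r = (∫ s in r..r₀, Ψ (s ^ N) * s ^ ((1:ℝ) - N)) + u r₀ := by
        rw [hu r, hu r₀, intervalIntegral.integral_add_adjacent_intervals h1 h2]
      have hpiece : (∫ s in r..r₀, Ψ (s ^ N) * s ^ ((1:ℝ) - N)) = (r₀ ^ 2 - r ^ 2) / 2 := by
        rw [intervalIntegral.integral_congr (g := fun s : ℝ => s) ?_, integral_id]
        intro s hs
        rw [uIcc_of_le hrr₀] at hs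
        have hs0 : 0 < s := lt_of_lt_of_le hr hs.1
        show Ψ (s ^ N) * s ^ ((1:ℝ) - N) = s
        rw [hΨ1 _ ⟨pow_pos hs0 N, pow_le_pow_left₀ hs0.le hs.2 N⟩,
          ← Real.rpow_natCast s N, ← Real.rpow_add hs0]
        norm_num
      have h3 : u r₀ ≤ κ/((N:ℝ)-2) * r₀ ^ 2 := by
        have := hub1 r₀ hr₀0 hr₀1.le
        calc u r₀ ≤ κ/((N:ℝ)-2) * r₀ ^ N * r₀ ^ ((2:ℝ) - N) := this
          _ = κ/((N:ℝ)-2) * r₀ ^ 2 := by rw [mul_assoc, hr₀2]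
      have hr2 : 0 ≤ r ^ 2 := sq_nonneg r
      rw [hsplit, hpiece, hAdef]
      nlinarith
    · rw [hu, intervalIntegral.integral_undef hInt]
      positivity
  -- pointwise bound by a piecewise radial function g
  set g : ℝ → ℝ := fun r =>
    if r < 1 then
      (if r ≤ r₀ then A ^ q * r₀ ^ (2*q) else A ^ q * r₀ ^ ((N:ℝ)*q) * r ^ (((2:ℝ)-N)*q))
    else 0 with hgdef
  have hpt : ∀ r : ℝ, 0 < r → r < 1 → |u r| ^ q ≤ g r := by
    intro r hr hr1
    have h0 := hupos r hr hr1.le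
    rw [abs_of_nonneg h0, hgdef]
    simp only [if_pos hr1]
    by_cases hcase : r ≤ r₀
    · rw [if_pos hcase]
      calc u r ^ q ≤ (A * r₀ ^ 2) ^ q :=
            Real.rpow_le_rpow h0 (hub2 r hr hcase) hq0.le
        _ = A ^ q * r₀ ^ (2*q) := by
            rw [Real.mul_rpow hApos.le (by positivity), ← Real.rpow_natCast r₀ 2,
              ← Real.rpow_mul hr₀0.le]
            norm_num
    · rw [if_neg hcase]
      have hb' : u r ≤ A * (r₀ ^ N * r ^ ((2:ℝ) - N)) := by
        have h1 := hub1 r hr hr1.le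
        have h2 : κ/((N:ℝ)-2) ≤ A := by rw [hAdef]; linarith
        have h3 : 0 ≤ r₀ ^ N * r ^ ((2:ℝ) - N) := by positivity
        calc u r ≤ κ/((N:ℝ)-2) * r₀ ^ N * r ^ ((2:ℝ) - N) := h1
          _ = κ/((N:ℝ)-2) * (r₀ ^ N * r ^ ((2:ℝ) - N)) := by ring
          _ ≤ A * (r₀ ^ N * r ^ ((2:ℝ) - N)) := mul_le_mul_of_nonneg_right h2 h3
      calc u r ^ q ≤ (A * (r₀ ^ N * r ^ ((2:ℝ) - N))) ^ q :=
            Real.rpow_le_rpow h0 hb' hq0.le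
        _ = A ^ q * r₀ ^ ((N:ℝ)*q) * r ^ (((2:ℝ)-N)*q) := by
            rw [Real.mul_rpow hApos.le (by positivity),
              Real.mul_rpow (by positivity) (by positivity),
              ← Real.rpow_natCast r₀ N, ← Real.rpow_mul hr₀0.le, ← Real.rpow_mul hr.le,
              mul_assoc]
  have hgnn : ∀ r : ℝ, 0 ≤ r → 0 ≤ g r := by
    intro r hr0; rw [hgdef]; dsimp only
    split_ifs with h1 h2
    · positivity
    · exact mul_nonneg (by positivity) (Real.rpow_nonneg hr0 _)
    · exact le_refl 0
  have hgm : Measurable g := by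
    rw [hgdef]
    refine Measurable.ite (measurableSet_lt measurable_id measurable_const) ?_ measurable_const
    exact Measurable.ite (measurableSet_le measurable_id measurable_const) measurable_const
      ((measurable_id.pow measurable_const).const_mul _)
  have hM : ∀ r : ℝ, g r ≤ A ^ q * r₀ ^ (2*q) + A ^ q * r₀ ^ ((N:ℝ)*q) * r₀ ^ (((2:ℝ)-N)*q) := by
    intro r
    rw [hgdef]; dsimp only
    split_ifs with h1 h2
    · have h3 : (0:ℝ) ≤ A ^ q * r₀ ^ ((N:ℝ)*q) * r₀ ^ (((2:ℝ)-N)*q) := by positivity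
      linarith
    · have hz : (((2:ℝ)-N)*q) ≤ 0 :=
        mul_nonpos_iff.mpr (Or.inr ⟨by linarith, hq0.le⟩)
      have hkey : r ^ (((2:ℝ)-N)*q) ≤ r₀ ^ (((2:ℝ)-N)*q) :=
        Real.rpow_le_rpow_of_nonpos hr₀0 (not_le.mp h2).le hz
      have h4 : A ^ q * r₀ ^ ((N:ℝ)*q) * r ^ (((2:ℝ)-N)*q) ≤
          A ^ q * r₀ ^ ((N:ℝ)*q) * r₀ ^ (((2:ℝ)-N)*q) :=
        mul_le_mul_of_nonneg_left hkey (by positivity)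
      have h5 : (0:ℝ) ≤ A ^ q * r₀ ^ (2*q) := by positivity
      linarith
    · positivity
  have hgint : Integrable (fun x : EuclideanSpace ℝ (Fin N) => g ‖x‖) := by
    refine Integrable.mono'
      (g := (ball (0:EuclideanSpace ℝ (Fin N)) 1).indicator
          (fun _ => A ^ q * r₀ ^ (2*q) + A ^ q * r₀ ^ ((N:ℝ)*q) * r₀ ^ (((2:ℝ)-N)*q)))
      ?_ ?_ ?_
    · exact (integrableOn_const measure_ball_lt_top.ne).integrable_indicator
        measurableSet_ball
    · exact (hgm.comp measurable_norm).aestronglyMeasurable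
    · apply ae_of_all
      intro x
      by_cases hx : x ∈ ball (0:EuclideanSpace ℝ (Fin N)) 1
      · rw [indicator_of_mem hx, Real.norm_eq_abs, abs_of_nonneg (hgnn _ (norm_nonneg x))]
        exact hM _
      · rw [indicator_of_notMem hx, Real.norm_eq_abs]
        have hx1 : ¬ ‖x‖ < 1 := by simpa [mem_ball_zero_iff] using hx
        rw [hgdef]; dsimp only; rw [if_neg hx1]; simp
  have step1 : (∫ x in ball (0:EuclideanSpace ℝ (Fin N)) 1, |u ‖x‖| ^ q) ≤
      ∫ x in ball (0:EuclideanSpace ℝ (Fin N)) 1, g ‖x‖ := by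
    apply integral_mono_of_nonneg
    · exact ae_of_all _ fun x => Real.rpow_nonneg (abs_nonneg _) q
    · exact hgint.integrableOn
    · have h1 : ∀ᵐ x ∂(volume.restrict (ball (0:EuclideanSpace ℝ (Fin N)) 1)),
          x ∈ ball (0:EuclideanSpace ℝ (Fin N)) 1 := ae_restrict_mem measurableSet_ball
      have h2 : ∀ᵐ x ∂(volume.restrict (ball (0:EuclideanSpace ℝ (Fin N)) 1)),
          x ≠ (0:EuclideanSpace ℝ (Fin N)) := by
        refine ae_restrict_of_ae ?_
        have h3 : volume ({(0:EuclideanSpace ℝ (Fin N))} : Set _) = 0 := measure_singleton _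
        rw [ae_iff]
        convert h3 using 2
        ext x; simp
      filter_upwards [h1, h2] with x hx hx0
      exact hpt ‖x‖ (norm_pos_iff.mpr hx0) (mem_ball_zero_iff.mp hx)
  have step2 : (∫ x in ball (0:EuclideanSpace ℝ (Fin N)) 1, g ‖x‖) =
      ∫ x : EuclideanSpace ℝ (Fin N), g ‖x‖ := by
    apply setIntegral_eq_integral_of_forall_compl_eq_zero
    intro x hx
    have hx1 : ¬ ‖x‖ < 1 := by simpa [mem_ball_zero_iff] using hx
    rw [hgdef]; dsimp only; rw [if_neg hx1]
  have step3 : (∫ x : EuclideanSpace ℝ (Fin N), g ‖x‖) =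
      (N:ℝ) * (volume (ball (0:EuclideanSpace ℝ (Fin N)) 1)).toReal *
        ∫ y in Ioi (0:ℝ), y ^ (N-1) * g y := by
    have h := MeasureTheory.integral_fun_norm_addHaar
      (volume : Measure (EuclideanSpace ℝ (Fin N))) g
    rw [h]
    simp only [finrank_euclideanSpace_fin, smul_eq_mul, nsmul_eq_mul, measureReal_def]
    ring
  -- split the one-dimensional integral
  have hpart : Ioi (0:ℝ) = (Ioc (0:ℝ) r₀ ∪ Ioo r₀ 1) ∪ Ici (1:ℝ) := by
    rw [Ioc_union_Ioo_eq_Ioo hr₀0.le hr₀1, Ioo_union_Ici_eq_Ioi one_pos]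
  have ic1 : IntegrableOn (fun y : ℝ => y ^ (N-1) * g y) (Ioc 0 r₀) := by
    refine IntegrableOn.congr_fun
      (f := fun y : ℝ => y ^ (N-1) * (A ^ q * r₀ ^ (2*q))) ?_ ?_ measurableSet_Ioc
    · exact Continuous.integrableOn_Ioc ((continuous_pow (N-1)).mul continuous_const)
    · intro y hy
      have hy1 : y < 1 := lt_of_le_of_lt hy.2 hr₀1
      rw [hgdef]; dsimp only; rw [if_pos hy1, if_pos hy.2]
  have ic2 : IntegrableOn (fun y : ℝ => y ^ (N-1) * g y) (Ioo r₀ 1) := by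
    refine IntegrableOn.congr_fun
      (f := fun y : ℝ => y ^ (N-1) * (A ^ q * r₀ ^ ((N:ℝ)*q) * y ^ (((2:ℝ)-N)*q)))
      ?_ ?_ measurableSet_Ioo
    · apply IntegrableOn.mono_set (t := Icc r₀ 1) ?_ Ioo_subset_Icc_self
      apply ContinuousOn.integrableOn_Icc
      apply ContinuousOn.mul (continuous_pow (N-1)).continuousOn
      apply ContinuousOn.mul continuousOn_const
      exact ContinuousOn.rpow_const continuousOn_id
        (fun x hx => Or.inl (ne_of_gt (lt_of_lt_of_le hr₀0 hx.1)))
    · intro y hy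
      rw [hgdef]; dsimp only; rw [if_pos hy.2, if_neg (not_le.mpr hy.1)]
  have ic3 : IntegrableOn (fun y : ℝ => y ^ (N-1) * g y) (Ici 1) := by
    refine IntegrableOn.congr_fun (f := fun _ : ℝ => (0:ℝ)) (integrableOn_zero) ?_
      measurableSet_Ici
    intro y hy
    have hy1 : ¬ y < 1 := not_lt.mpr hy
    rw [hgdef]; dsimp only; rw [if_neg hy1, mul_zero]
  have d2 : Disjoint (Ioc (0:ℝ) r₀) (Ioo r₀ 1) := by
    rw [Set.disjoint_left]
    intro a ha hb
    rw [mem_Ioc] at ha; rw [mem_Ioo] at hb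
    linarith [ha.2, hb.1]
  have d1 : Disjoint (Ioc (0:ℝ) r₀ ∪ Ioo r₀ 1) (Ici (1:ℝ)) := by
    rw [Set.disjoint_left]
    intro a ha hb
    rw [mem_Ici] at hb
    rcases ha with ha | ha
    · rw [mem_Ioc] at ha; linarith [ha.2]
    · rw [mem_Ioo] at ha; linarith [ha.2]
  have hsplit2 : (∫ y in Ioi (0:ℝ), y ^ (N-1) * g y) =
      ((∫ y in Ioc (0:ℝ) r₀, y ^ (N-1) * g y) + (∫ y in Ioo r₀ (1:ℝ), y ^ (N-1) * g y)) +
        (∫ y in Ici (1:ℝ), y ^ (N-1) * g y) := by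
    rw [hpart, setIntegral_union d1 measurableSet_Ici (ic1.union ic2) ic3,
      setIntegral_union d2 measurableSet_Ioo ic1 ic2]
  have v1 : (∫ y in Ioc (0:ℝ) r₀, y ^ (N-1) * g y) =
      A ^ q * r₀ ^ (2*q) * (r₀ ^ N / (N:ℝ)) := by
    rw [← intervalIntegral.integral_of_le hr₀0.le]
    rw [intervalIntegral.integral_congr
      (g := fun y : ℝ => A ^ q * r₀ ^ (2*q) * y ^ (N-1)) ?_]
    · rw [intervalIntegral.integral_const_mul, integral_pow,
        Nat.sub_add_cancel (by omega : 1 ≤ N), zero_pow (by omega : N ≠ 0),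
        show ((N-1:ℕ):ℝ) + 1 = (N:ℝ) by
          push_cast [Nat.cast_sub (by omega : 1 ≤ N)]; ring]
      ring
    · intro y hy
      rw [uIcc_of_le hr₀0.le] at hy
      have hy1 : y < 1 := lt_of_le_of_lt hy.2 hr₀1
      show y ^ (N-1) * g y = _
      rw [hgdef]; dsimp only; rw [if_pos hy1, if_pos hy.2]; ring
  have v3 : (∫ y in Ici (1:ℝ), y ^ (N-1) * g y) = 0 := by
    rw [setIntegral_congr_fun measurableSet_Ici (g := fun _ : ℝ => (0:ℝ)) ?_, integral_zero]
    intro y hy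
    have hy1 : ¬ y < 1 := not_lt.mpr hy
    show y ^ (N-1) * g y = 0
    rw [hgdef]; dsimp only; rw [if_neg hy1, mul_zero]
  have v2 : (∫ y in Ioo r₀ (1:ℝ), y ^ (N-1) * g y) ≤
      A ^ q * r₀ ^ ((N:ℝ)*q) * (r₀ ^ ((N:ℝ) + ((2:ℝ)-N)*q) / D) := by
    have e : (∫ y in Ioo r₀ (1:ℝ), y ^ (N-1) * g y) =
        ∫ y in r₀..1, A ^ q * r₀ ^ ((N:ℝ)*q) * y ^ (((N:ℝ)-1) + ((2:ℝ)-N)*q) := by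
      rw [setIntegral_congr_fun measurableSet_Ioo
        (g := fun y : ℝ => A ^ q * r₀ ^ ((N:ℝ)*q) * y ^ (((N:ℝ)-1) + ((2:ℝ)-N)*q)) ?_]
      · rw [← integral_Ioc_eq_integral_Ioo, ← intervalIntegral.integral_of_le hr₀1.le]
      · intro y hy
        rw [mem_Ioo] at hy
        have hy0 : 0 < y := lt_trans hr₀0 hy.1
        have hnp : (y:ℝ) ^ (N-1) = y ^ ((N:ℝ) - 1) := by
          rw [← Real.rpow_natCast y (N-1)]
          congr 1
          push_cast [Nat.cast_sub (by omega : 1 ≤ N)]; ring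
        show y ^ (N-1) * g y = _
        rw [hgdef]; dsimp only
        rw [if_pos hy.2, if_neg (not_le.mpr hy.1), hnp]
        rw [show y ^ ((N:ℝ)-1) * (A ^ q * r₀ ^ ((N:ℝ)*q) * y ^ (((2:ℝ)-N)*q)) =
          A ^ q * r₀ ^ ((N:ℝ)*q) * (y ^ ((N:ℝ)-1) * y ^ (((2:ℝ)-N)*q)) by ring,
          ← Real.rpow_add hy0]
    rw [e, intervalIntegral.integral_const_mul]
    rw [integral_rpow (Or.inr ⟨by intro hE; rw [hDdef] at hD; nlinarith,
      by rw [uIcc_of_le hr₀1.le]; exact fun h => absurd h.1 (not_le.mpr hr₀0)⟩)]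
    rw [Real.one_rpow,
      show ((N:ℝ)-1) + ((2:ℝ)-N)*q + 1 = (N:ℝ) + ((2:ℝ)-N)*q by ring]
    have he2 : ((1:ℝ) - r₀ ^ ((N:ℝ) + ((2:ℝ)-N)*q)) / ((N:ℝ) + ((2:ℝ)-N)*q) =
        (r₀ ^ ((N:ℝ) + ((2:ℝ)-N)*q) - 1) / D := by
      rw [div_eq_div_iff ?_ (by linarith), hDdef]
      · ring
      · rw [hDdef] at hD; intro h0; nlinarith
    rw [he2]
    apply mul_le_mul_of_nonneg_left ?_ (by positivity)
    gcongr
    linarith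
  have hexp1 : A ^ q * r₀ ^ (2*q) * (r₀ ^ N / (N:ℝ)) =
      A ^ q * (1/(N:ℝ)) * r₀ ^ ((N:ℝ) + 2*q) := by
    rw [← Real.rpow_natCast r₀ N,
      show (N:ℝ) + 2*q = 2*q + (N:ℝ) by ring, Real.rpow_add hr₀0]
    ring
  have hexp2 : A ^ q * r₀ ^ ((N:ℝ)*q) * (r₀ ^ ((N:ℝ) + ((2:ℝ)-N)*q) / D) =
      A ^ q * (1/D) * r₀ ^ ((N:ℝ) + 2*q) := by
    have hsplitpow : r₀ ^ ((N:ℝ) + 2*q) = r₀ ^ ((N:ℝ)*q) * r₀ ^ ((N:ℝ) + ((2:ℝ)-N)*q) := by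
      rw [← Real.rpow_add hr₀0]; congr 1; ring
    rw [hsplitpow]; ring
  have hS : (∫ y in Ioi (0:ℝ), y ^ (N-1) * g y) ≤
      A ^ q * (1/(N:ℝ) + 1/D) * r₀ ^ ((N:ℝ) + 2*q) := by
    rw [hsplit2, v1, v3, add_zero, hexp1]
    have h2 : (∫ y in Ioo r₀ (1:ℝ), y ^ (N-1) * g y) ≤
        A ^ q * (1/D) * r₀ ^ ((N:ℝ) + 2*q) := by
      rw [← hexp2]; exact v2
    have h3 : A ^ q * (1/(N:ℝ)) * r₀ ^ ((N:ℝ) + 2*q) + A ^ q * (1/D) * r₀ ^ ((N:ℝ) + 2*q) =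
        A ^ q * (1/(N:ℝ) + 1/D) * r₀ ^ ((N:ℝ) + 2*q) := by ring
    linarith
  calc (∫ x in ball (0 : EuclideanSpace ℝ (Fin N)) 1, |u ‖x‖| ^ q)
      ≤ ∫ x in ball (0 : EuclideanSpace ℝ (Fin N)) 1, g ‖x‖ := step1
    _ = ∫ x : EuclideanSpace ℝ (Fin N), g ‖x‖ := step2
    _ = (N:ℝ) * (volume (ball (0 : EuclideanSpace ℝ (Fin N)) 1)).toReal *
        ∫ y in Ioi (0:ℝ), y ^ (N-1) * g y := step3
    _ ≤ (N:ℝ) * (volume (ball (0 : EuclideanSpace ℝ (Fin N)) 1)).toReal *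
        (A ^ q * (1/(N:ℝ) + 1/D) * r₀ ^ ((N:ℝ) + 2*q)) :=
      mul_le_mul_of_nonneg_left hS (by positivity)
    _ = C * r₀ ^ ((N:ℝ) + 2*q) := by rw [hCdef]; ring
end
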